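/- The function σ₁(s) = [Γ(a+1)/(√π Γ(a+1/2))] (1+s²)^{-a} / X(s), with X(s) = 1/2 + [Γ(a+1)/(√π Γ(a+1/2))] s·₂F₁(a+1,1/2;3/2;-s²), solves the ODE (1+s²)²(σ'')² + 4(1+s²)(σ')³ - 8sσ(σ')² + 4σ²(σ'-a²) + 8a²sσσ' + 4[(1+2a) - a²s²](σ')² = 0 (the N = 1 case). -/

import Mathlib

open MeasureTheory

/-- The Gauss hypergeometric function `₂F₁(a,b;c;z)` (for `c > b > 0`, `z < 1`),
defined via the Euler integral representation. -/
noncomputable def hyp2F1 (a b c z : ℝ) : ℝ :=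
  (Real.Gamma c / (Real.Gamma b * Real.Gamma (c - b))) *
    ∫ t in Set.Ioo (0 : ℝ) 1, t ^ (b - 1) * (1 - t) ^ (c - b - 1) * (1 - z * t) ^ (-a)

/-- `X(s) = 1/2 + [Γ(a+1)/(√π Γ(a+1/2))] s ₂F₁(a+1,1/2;3/2;-s²)`. -/
noncomputable def Xfun (a : ℝ) (s : ℝ) : ℝ :=
  1 / 2 + Real.Gamma (a + 1) / (Real.sqrt Real.pi * Real.Gamma (a + 1 / 2)) *
    s * hyp2F1 (a + 1) (1 / 2) (3 / 2) (-s ^ 2)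

/-!
The substitution `t = v²` in the Euler integral gives
`s · ₂F₁(a+1, 1/2; 3/2; -s²) = ∫₀ˢ (1+u²)^(-a-1) du`, and the Beta integral `B(a+1/2, 1/2)`,
reached through `x = 1/(1+u²)`, shows that `Γ(a+1)/(√π Γ(a+1/2))` normalises the weight
`(1+u²)^(-a-1)` to a probability density. Hence `X` is its distribution function, so `X > 0` and
`σ₁ = (1+s²) X'/X`, which satisfies the Riccati equation
`(1+s²) σ' = -2as σ - σ²`. Differentiating this once more reduces the second-order equation to
an algebraic identity.
-/

open Set Real

noncomputable def cauchyWeight (a u : ℝ) : ℝ := (1 + u ^ 2) ^ (-(a + 1))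

lemma cauchyWeight_pos (a u : ℝ) : 0 < cauchyWeight a u :=
  rpow_pos_of_pos (by positivity) _

lemma continuous_cauchyWeight (a : ℝ) : Continuous (cauchyWeight a) :=
  (continuous_const.add (continuous_pow 2)).rpow_const fun u =>
    Or.inl (by positivity : (1 : ℝ) + u ^ 2 ≠ 0)

lemma cauchyWeight_neg (a u : ℝ) : cauchyWeight a (-u) = cauchyWeight a u := by
  simp [cauchyWeight]

lemma integrable_cauchyWeight {a : ℝ} (ha : -1 / 2 < a) : Integrable (cauchyWeight a) := by
  have h := integrable_rpow_neg_one_add_norm_sq (E := ℝ) (μ := volume) (r := 2 * (a + 1))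
    (by rw [Module.finrank_self, Nat.cast_one]; linarith)
  convert h using 2 with u
  simp only [cauchyWeight, norm_eq_abs, sq_abs]
  ring_nf

lemma sq_rpow_one_half_sub_one {v : ℝ} (hv : 0 ≤ v) : (v ^ 2) ^ ((1 : ℝ) / 2 - 1) = v⁻¹ := by
  rw [← rpow_natCast, ← rpow_mul hv]
  norm_num [rpow_neg_one]

lemma image_sq_Ioo_zero_one : (fun v : ℝ => v ^ 2) '' Ioo 0 1 = Ioo 0 1 := by
  ext x
  constructor
  · rintro ⟨v, ⟨hv0, hv1⟩, rfl⟩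
    exact ⟨by positivity, by nlinarith⟩
  · rintro ⟨hx0, hx1⟩
    exact ⟨√x, ⟨sqrt_pos.2 hx0, (sqrt_lt' one_pos).2 (by simpa using hx1)⟩, sq_sqrt hx0.le⟩

lemma image_inv_one_add_sq_Ioi_zero : (fun u : ℝ => (1 + u ^ 2)⁻¹) '' Ioi 0 = Ioo 0 1 := by
  ext x
  constructor
  · rintro ⟨u, hu, rfl⟩
    exact ⟨by positivity, inv_lt_one_of_one_lt₀ (by nlinarith [mem_Ioi.1 hu])⟩
  · rintro ⟨hx0, hx1⟩
    have hx : 0 < x⁻¹ - 1 := sub_pos.2 ((one_lt_inv₀ hx0).2 hx1)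
    exact ⟨√(x⁻¹ - 1), sqrt_pos.2 hx, by simp only [sq_sqrt hx.le, add_sub_cancel, inv_inv]⟩

lemma hyp2F1_half_threeHalves (b z : ℝ) :
    hyp2F1 b (1 / 2) (3 / 2) z = ∫ v in (0 : ℝ)..1, (1 - z * v ^ 2) ^ (-b) := by
  have hprefactor : Gamma (3 / 2) / (Gamma (1 / 2) * Gamma (3 / 2 - 1 / 2)) = 1 / 2 := by
    rw [show (3 / 2 : ℝ) = 1 / 2 + 1 by norm_num, Gamma_add_one (by norm_num),
      add_sub_cancel_left, Gamma_one]
    field_simp [(Gamma_pos_of_pos (by norm_num : (0 : ℝ) < 1 / 2)).ne']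
  have hinj : InjOn (fun v : ℝ => v ^ 2) (Ioo 0 1) := fun u hu v hv h => by
    nlinarith [hu.1, hv.1, (show u ^ 2 = v ^ 2 from h)]
  have hderiv : ∀ v ∈ Ioo (0 : ℝ) 1,
      HasDerivWithinAt (fun v : ℝ => v ^ 2) (2 * v) (Ioo 0 1) v := fun v _ => by
    simpa using (hasDerivAt_pow 2 v).hasDerivWithinAt
  unfold hyp2F1
  rw [hprefactor, ← image_sq_Ioo_zero_one,
    integral_image_eq_integral_abs_deriv_smul measurableSet_Ioo hderiv hinj,
    intervalIntegral.integral_of_le zero_le_one, integral_Ioc_eq_integral_Ioo, ← integral_const_mul]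
  refine setIntegral_congr_fun measurableSet_Ioo fun v ⟨hv0, _⟩ => ?_
  simp only [smul_eq_mul, sq_rpow_one_half_sub_one hv0.le,
    abs_of_pos (by positivity : (0 : ℝ) < 2 * v)]
  norm_num
  field_simp

lemma mul_hyp2F1_eq_integral_cauchyWeight (a s : ℝ) :
    s * hyp2F1 (a + 1) (1 / 2) (3 / 2) (-s ^ 2) = ∫ u in (0 : ℝ)..s, cauchyWeight a u := by
  have h := intervalIntegral.smul_integral_comp_mul_left (cauchyWeight a) s (a := 0) (b := 1)
  simp only [mul_zero, mul_one, smul_eq_mul] at h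
  rw [hyp2F1_half_threeHalves, ← h]
  congr 1
  refine intervalIntegral.integral_congr fun v _ => ?_
  simp only [cauchyWeight]
  ring_nf

lemma Gamma_mul_Gamma_eq_mul_integral {p q : ℝ} (hp : 0 < p) (hq : 0 < q) :
    Gamma p * Gamma q =
      Gamma (p + q) * ∫ x in Ioo (0 : ℝ) 1, x ^ (p - 1) * (1 - x) ^ (q - 1) := by
  have hbeta := Complex.Gamma_mul_Gamma_eq_betaIntegral (s := p) (t := q)
    (by simpa using hp) (by simpa using hq)
  have hreal : Complex.betaIntegral p q =
      ((∫ x in (0 : ℝ)..1, x ^ (p - 1) * (1 - x) ^ (q - 1) : ℝ) : ℂ) := by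
    rw [Complex.betaIntegral, ← intervalIntegral.integral_ofReal]
    refine intervalIntegral.integral_congr fun x hx => ?_
    rw [uIcc_of_le zero_le_one] at hx
    push_cast [Complex.ofReal_cpow hx.1, Complex.ofReal_cpow (sub_nonneg.2 hx.2)]
    rfl
  rw [hreal, ← Complex.ofReal_add, Complex.Gamma_ofReal, Complex.Gamma_ofReal,
    Complex.Gamma_ofReal, ← Complex.ofReal_mul, ← Complex.ofReal_mul,
    Complex.ofReal_inj] at hbeta
  rwa [intervalIntegral.integral_of_le zero_le_one, integral_Ioc_eq_integral_Ioo] at hbeta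

lemma integral_Ioo_eq_two_mul_integral_Ioi_cauchyWeight (a : ℝ) :
    ∫ x in Ioo (0 : ℝ) 1, x ^ (a + 1 / 2 - 1) * (1 - x) ^ ((1 : ℝ) / 2 - 1) =
      2 * ∫ u in Ioi (0 : ℝ), cauchyWeight a u := by
  set f : ℝ → ℝ := fun u => (1 + u ^ 2)⁻¹
  have hP : ∀ u : ℝ, 0 < 1 + u ^ 2 := fun u => by positivity
  have hinj : InjOn f (Ioi 0) := fun u hu v hv h => by
    have := inv_injective h
    nlinarith [mem_Ioi.1 hu, mem_Ioi.1 hv]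
  have hderiv : ∀ u ∈ Ioi (0 : ℝ),
      HasDerivWithinAt f (-(2 * u) / (1 + u ^ 2) ^ 2) (Ioi 0) u := fun u _ => by
    have h : HasDerivAt (fun u : ℝ => 1 + u ^ 2) (2 * u) u := by
      simpa using (hasDerivAt_pow 2 u).const_add 1
    exact (h.inv (hP u).ne').hasDerivWithinAt
  rw [← image_inv_one_add_sq_Ioi_zero,
    integral_image_eq_integral_abs_deriv_smul measurableSet_Ioi hderiv hinj, ← integral_const_mul]
  refine setIntegral_congr_fun measurableSet_Ioi fun u (hu : 0 < u) => ?_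
  have hPu := hP u
  have hf : (1 - f u) = u ^ 2 * f u := by
    simp only [f]
    field_simp
    ring
  rw [hf, mul_rpow (by positivity) (inv_nonneg.2 hPu.le), sq_rpow_one_half_sub_one hu.le,
    smul_eq_mul, abs_div, abs_neg,
    abs_of_pos (by positivity : 0 < 2 * u), abs_of_pos (by positivity : 0 < (1 + u ^ 2) ^ 2)]
  simp only [f, cauchyWeight, inv_rpow hPu.le, ← rpow_neg hPu.le]
  rw [show ((1 + u ^ 2) ^ 2 : ℝ) = (1 + u ^ 2) ^ (2 : ℝ) by norm_cast, div_eq_mul_inv,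
    ← rpow_neg hPu.le]
  field_simp
  rw [← rpow_add hPu, ← rpow_add hPu]
  ring_nf

noncomputable def cauchyNormConst (a : ℝ) : ℝ := Gamma (a + 1) / (√π * Gamma (a + 1 / 2))

lemma cauchyNormConst_pos {a : ℝ} (ha : -1 / 2 < a) : 0 < cauchyNormConst a := by
  have h1 := Gamma_pos_of_pos (by linarith : 0 < a + 1)
  have h2 := Gamma_pos_of_pos (by linarith : 0 < a + 1 / 2)
  unfold cauchyNormConst
  positivity

lemma cauchyNormConst_mul_integral_Iic_zero {a : ℝ} (ha : -1 / 2 < a) :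
    cauchyNormConst a * ∫ u in Iic (0 : ℝ), cauchyWeight a u = 1 / 2 := by
  have hbeta := Gamma_mul_Gamma_eq_mul_integral (by linarith : 0 < a + 1 / 2) one_half_pos
  rw [Gamma_one_half_eq, show a + 1 / 2 + 1 / 2 = a + 1 by ring,
    integral_Ioo_eq_two_mul_integral_Ioi_cauchyWeight] at hbeta
  have hsymm : ∫ u in Iic (0 : ℝ), cauchyWeight a u = ∫ u in Ioi (0 : ℝ), cauchyWeight a u := by
    simpa [cauchyWeight_neg] using (integral_comp_neg_Ioi 0 (cauchyWeight a)).symm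
  have h2 := Gamma_pos_of_pos (by linarith : 0 < a + 1 / 2)
  rw [hsymm, cauchyNormConst, div_mul_eq_mul_div, div_eq_iff (by positivity)]
  linarith

lemma Xfun_eq_integral (a s : ℝ) :
    Xfun a s = 1 / 2 + cauchyNormConst a * ∫ u in (0 : ℝ)..s, cauchyWeight a u := by
  rw [Xfun, mul_assoc, mul_hyp2F1_eq_integral_cauchyWeight, cauchyNormConst]

lemma Xfun_eq_integral_Iic {a : ℝ} (ha : -1 / 2 < a) (s : ℝ) :
    Xfun a s = cauchyNormConst a * ∫ u in Iic s, cauchyWeight a u := by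
  have hint := (integrable_cauchyWeight ha).integrableOn (s := Iic s)
  rw [Xfun_eq_integral, ← intervalIntegral.integral_Iic_sub_Iic
    (integrable_cauchyWeight ha).integrableOn hint, mul_sub,
    cauchyNormConst_mul_integral_Iic_zero ha]
  ring

lemma Xfun_pos {a : ℝ} (ha : -1 / 2 < a) (s : ℝ) : 0 < Xfun a s := by
  have hint : 0 < ∫ u in Iic s, cauchyWeight a u := by
    rw [setIntegral_pos_iff_support_of_nonneg_ae
      (ae_of_all _ fun u => (cauchyWeight_pos a u).le) (integrable_cauchyWeight ha).integrableOn,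
      Function.support_eq_univ fun u => (cauchyWeight_pos a u).ne', univ_inter]
    simp
  rw [Xfun_eq_integral_Iic ha]
  exact mul_pos (cauchyNormConst_pos ha) hint

lemma hasDerivAt_Xfun (a s : ℝ) :
    HasDerivAt (Xfun a) (cauchyNormConst a * cauchyWeight a s) s := by
  rw [funext (Xfun_eq_integral a)]
  exact ((continuous_cauchyWeight a).integral_hasStrictDerivAt 0 s).hasDerivAt.const_mul _
    |>.const_add _

noncomputable def sigmaOne (a t : ℝ) : ℝ := cauchyNormConst a * (1 + t ^ 2) ^ (-a) / Xfun a t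

lemma hasDerivAt_sigmaOne {a : ℝ} (ha : -1 / 2 < a) (s : ℝ) :
    HasDerivAt (sigmaOne a)
      ((-2 * a * s * sigmaOne a s - sigmaOne a s ^ 2) / (1 + s ^ 2)) s := by
  have hP : (0 : ℝ) < 1 + s ^ 2 := by positivity
  have hpow : HasDerivAt (fun t : ℝ => (1 + t ^ 2) ^ (-a))
      (2 * s * (-a) * (1 + s ^ 2) ^ (-a - 1)) s := by
    have h : HasDerivAt (fun t : ℝ => 1 + t ^ 2) (2 * s) s := by
      simpa using (hasDerivAt_pow 2 s).const_add 1
    exact h.rpow_const (Or.inl hP.ne')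
  have hweight : (1 + s ^ 2) ^ (-a - 1) = (1 + s ^ 2) ^ (-a) / (1 + s ^ 2) := by
    rw [rpow_sub hP, rpow_one]
  refine ((hpow.const_mul _).div (hasDerivAt_Xfun a s) (Xfun_pos ha s).ne').congr_deriv ?_
  rw [cauchyWeight, show -(a + 1) = -a - 1 by ring, hweight, sigmaOne]
  field_simp

lemma sigmaForm_of_riccati {a : ℝ} {σ : ℝ → ℝ}
    (hσ : ∀ t, HasDerivAt σ ((-2 * a * t * σ t - σ t ^ 2) / (1 + t ^ 2)) t) (s : ℝ) :
    (1 + s ^ 2) ^ 2 * (deriv (deriv σ) s) ^ 2 +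
        4 * (1 + s ^ 2) * (deriv σ s) ^ 3 -
        8 * s * σ s * (deriv σ s) ^ 2 +
        4 * (σ s) ^ 2 * (deriv σ s - a ^ 2) +
        8 * a ^ 2 * s * σ s * deriv σ s +
        4 * ((1 + 2 * a) - a ^ 2 * s ^ 2) * (deriv σ s) ^ 2 = 0 := by
  set R : ℝ → ℝ := fun t => (-2 * a * t * σ t - σ t ^ 2) / (1 + t ^ 2)
  have hP : (0 : ℝ) < 1 + s ^ 2 := by positivity
  have hnum : HasDerivAt (fun t => -2 * a * t * σ t - σ t ^ 2)
      (-2 * a * σ s + -2 * a * s * R s - 2 * σ s * R s) s := by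
    have hlin : HasDerivAt (fun t : ℝ => -2 * a * t) (-2 * a) s := by
      simpa using (hasDerivAt_id s).const_mul (-2 * a)
    refine ((hlin.mul (hσ s)).sub ((hσ s).pow 2)).congr_deriv ?_
    norm_num [R]
  have hden : HasDerivAt (fun t : ℝ => 1 + t ^ 2) (2 * s) s := by
    simpa using (hasDerivAt_pow 2 s).const_add 1
  have hR : HasDerivAt R _ s := hnum.div hden hP.ne'
  rw [show deriv σ = R from funext fun t => (hσ t).deriv, hR.deriv]
  simp only [R]
  field_simp
  ring

/-- `σ₁(s) = [Γ(a+1)/(√π Γ(a+1/2))](1+s²)^{-a}/X(s)` solves the `N = 1` case of the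
second order second degree ODE for the Cauchy single-interval gap probability. -/
theorem stmt12 (a : ℝ) (ha : 0 < a) (σ : ℝ → ℝ)
    (hσ : ∀ s : ℝ, σ s =
      Real.Gamma (a + 1) / (Real.sqrt Real.pi * Real.Gamma (a + 1 / 2)) *
        (1 + s ^ 2 : ℝ) ^ (-a) / Xfun a s) :
    ∀ s : ℝ,
      (1 + s ^ 2) ^ 2 * (deriv (deriv σ) s) ^ 2 +
        4 * (1 + s ^ 2) * (deriv σ s) ^ 3 -
        8 * s * σ s * (deriv σ s) ^ 2 +
        4 * (σ s) ^ 2 * (deriv σ s - a ^ 2) +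
        8 * a ^ 2 * s * σ s * deriv σ s +
        4 * ((1 + 2 * a) - a ^ 2 * s ^ 2) * (deriv σ s) ^ 2 = 0 := by
  obtain rfl : σ = sigmaOne a := funext hσ
  exact sigmaForm_of_riccati (hasDerivAt_sigmaOne (by linarith))
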